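/- Every rooted binary tree-child network is a rooted orchard network, i.e., admits a complete cherry-reduction sequence. -/

import Mathlib

/-!  Formalisation preliminaries for rooted and unrooted binary phylogenetic
networks, cherry reductions, cherry-reduction sequences and cherry-picking
sequences, following Döcker & Linz. -/

/-- A finite directed graph whose vertices are natural numbers. -/
structure DNet where
  verts : Finset ℕ
  arcs : Finset (ℕ × ℕ)

namespace DNet

/-- in-degree of a vertex -/
def inDeg (N : DNet) (v : ℕ) : ℕ := (N.arcs.filter (fun p => p.2 = v)).card

/-- out-degree of a vertex -/
def outDeg (N : DNet) (v : ℕ) : ℕ := (N.arcs.filter (fun p => p.1 = v)).card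

/-- the arc relation -/
def Arc (N : DNet) (u v : ℕ) : Prop := (u, v) ∈ N.arcs

/-- the digraph has no directed cycle -/
def Acyclic (N : DNet) : Prop := ∀ v, ¬ Relation.TransGen N.Arc v v

/-- root: in-degree 0 and out-degree 2 -/
def IsRoot (N : DNet) (v : ℕ) : Prop := v ∈ N.verts ∧ N.inDeg v = 0 ∧ N.outDeg v = 2

/-- leaf: in-degree 1 and out-degree 0 -/
def IsLeaf (N : DNet) (v : ℕ) : Prop := v ∈ N.verts ∧ N.inDeg v = 1 ∧ N.outDeg v = 0

/-- tree vertex: in-degree 1 and out-degree 2 -/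
def IsTreeVertex (N : DNet) (v : ℕ) : Prop := v ∈ N.verts ∧ N.inDeg v = 1 ∧ N.outDeg v = 2

/-- reticulation: in-degree 2 and out-degree 1 -/
def IsRet (N : DNet) (v : ℕ) : Prop := v ∈ N.verts ∧ N.inDeg v = 2 ∧ N.outDeg v = 1

/-- the network consists of a single vertex -/
def SingleVertex (N : DNet) : Prop := N.verts.card = 1 ∧ N.arcs = ∅

/-- the reticulation number of a rooted network: number of in-degree-2 vertices -/
def retNum (N : DNet) : ℕ := (N.verts.filter (fun v => N.inDeg v = 2)).card

/-- tree-child: every vertex with a child has a child that is a tree vertex or a leaf -/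
def TreeChild (N : DNet) : Prop :=
  ∀ v ∈ N.verts, N.outDeg v ≠ 0 → ∃ c, (v, c) ∈ N.arcs ∧ (N.IsTreeVertex c ∨ N.IsLeaf c)

/-- a stack: two reticulations joined by an arc -/
def HasStack (N : DNet) : Prop := ∃ u v, N.IsRet u ∧ N.IsRet v ∧ (u, v) ∈ N.arcs

/-- a pair of sibling reticulations: two reticulations with a common parent -/
def HasSiblingRets (N : DNet) : Prop :=
  ∃ p u v, u ≠ v ∧ N.IsRet u ∧ N.IsRet v ∧ (p, u) ∈ N.arcs ∧ (p, v) ∈ N.arcs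

/-- stack-free -/
def StackFree (N : DNet) : Prop := ¬ N.HasStack

end DNet

/-- `N` is a rooted binary phylogenetic network with leaf set `X`
(including the degenerate single-vertex network when `|X| = 1`). -/
def IsRootedBinaryNet (N : DNet) (X : Finset ℕ) : Prop :=
  (∃ x, X = {x} ∧ N.verts = {x} ∧ N.arcs = ∅) ∨
  ((∀ p ∈ N.arcs, p.1 ∈ N.verts ∧ p.2 ∈ N.verts) ∧
   (∀ p ∈ N.arcs, p.1 ≠ p.2) ∧
   N.Acyclic ∧
   (∃! ρ, ρ ∈ N.verts ∧ N.inDeg ρ = 0) ∧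
   (∀ v ∈ N.verts, N.IsRoot v ∨ N.IsLeaf v ∨ N.IsTreeVertex v ∨ N.IsRet v) ∧
   (∀ v, N.IsLeaf v ↔ v ∈ X))

/-- `[a,b]` is a cherry of the rooted network `N` (with `a` the leaf to be deleted). -/
def RCherry (N : DNet) (a b : ℕ) : Prop :=
  a ≠ b ∧ N.IsLeaf a ∧ N.IsLeaf b ∧ ∃ p, (p, a) ∈ N.arcs ∧ (p, b) ∈ N.arcs

/-- `(a,b)` is a reticulated cherry of the rooted network `N` with reticulation leaf `a`:
the parent of `a` is a reticulation and receives an arc from the parent of `b`. -/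
def RRetCherry (N : DNet) (a b : ℕ) : Prop :=
  a ≠ b ∧ N.IsLeaf a ∧ N.IsLeaf b ∧
  ∃ pa pb, (pa, a) ∈ N.arcs ∧ (pb, b) ∈ N.arcs ∧ N.IsRet pa ∧ (pb, pa) ∈ N.arcs

/-- `M` is obtained from the rooted network `N` by reducing the cherry `[a,b]`:
delete `a` and suppress (or, if it is the root, delete) the resulting degree-2 vertex. -/
def RReduceCherry (N M : DNet) (a b : ℕ) : Prop :=
  RCherry N a b ∧
  ∃ p, (p, a) ∈ N.arcs ∧ (p, b) ∈ N.arcs ∧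
    ((N.inDeg p = 0 ∧ M.verts = N.verts \ {a, p} ∧ M.arcs = N.arcs \ {(p, a), (p, b)}) ∨
     (∃ g, (g, p) ∈ N.arcs ∧ M.verts = N.verts \ {a, p} ∧
        M.arcs = insert (g, b) (N.arcs \ {(g, p), (p, a), (p, b)})))

/-- `M` is obtained from the rooted network `N` by reducing the reticulated cherry `(a,b)`
with reticulation leaf `a`: delete the reticulation arc `(p_b, p_a)` and suppress the two
resulting degree-2 vertices. -/
def RReduceRetCherry (N M : DNet) (a b : ℕ) : Prop :=
  RRetCherry N a b ∧
  ∃ pa pb qa qb, (pa, a) ∈ N.arcs ∧ (pb, b) ∈ N.arcs ∧ N.IsRet pa ∧ (pb, pa) ∈ N.arcs ∧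
    (qa, pa) ∈ N.arcs ∧ qa ≠ pb ∧ (qb, pb) ∈ N.arcs ∧
    M.verts = N.verts \ {pa, pb} ∧
    M.arcs = insert (qa, a) (insert (qb, b)
      (N.arcs \ {(pb, pa), (pa, a), (qa, pa), (pb, b), (qb, pb)}))

/-- A recorded reduction: either a cherry pair `[x,y]` or a reticulated-cherry pair `(x,y)`
(the deleted leaf, resp. the reticulation leaf, is listed first). -/
inductive Pick where
  | cherry (x y : ℕ)
  | ret (x y : ℕ)
deriving DecidableEq

namespace Pick

/-- first coordinate -/
def fst : Pick → ℕ
  | cherry x _ => x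
  | ret x _ => x

/-- second coordinate -/
def snd : Pick → ℕ
  | cherry _ y => y
  | ret _ y => y

/-- the pair contains the element `z` -/
def Contains (r : Pick) (z : ℕ) : Prop := r.fst = z ∨ r.snd = z

/-- the pair is a reticulated-cherry pair -/
def IsRetPair : Pick → Prop
  | cherry _ _ => False
  | ret _ _ => True

/-- the pair is a cherry pair -/
def IsCherryPair : Pick → Prop
  | cherry _ _ => True
  | ret _ _ => False

end Pick

/-- The step from `N` to `M` is the cherry reduction recorded by the pick `r`
(rooted version). -/
def RStep (N M : DNet) : Pick → Prop
  | .cherry x y => RReduceCherry N M x y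
  | .ret x y => RReduceRetCherry N M x y

/-- `(Ns 0, …, Ns k)` is a cherry-reduction sequence of rooted networks whose associated
cherry-picking sequence is `(rs 0, …, rs (k-1))`. -/
def RCherrySeq (Ns : ℕ → DNet) (rs : ℕ → Pick) (k : ℕ) : Prop :=
  ∀ i < k, RStep (Ns i) (Ns (i + 1)) (rs i)

/-- `(Ns 0, …, Ns k)` is a cherry-reduction sequence of rooted networks. -/
def RReductionSeq (Ns : ℕ → DNet) (k : ℕ) : Prop :=
  ∀ i < k, ∃ r, RStep (Ns i) (Ns (i + 1)) r

/-- `R` is a rooted orchard network: it admits a complete cherry-reduction sequence. -/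
def Orchard (R : DNet) : Prop :=
  ∃ Ns k, Ns 0 = R ∧ RReductionSeq Ns k ∧ (Ns k).SingleVertex

/-- `j = s(i)`: the smallest index `j > i` (within the sequence of length `k`) such that
`rs j` contains the first coordinate of `rs i`. -/
def SuccAt (rs : ℕ → Pick) (k i j : ℕ) : Prop :=
  i < j ∧ j < k ∧ (rs j).Contains (rs i).fst ∧
  ∀ l, i < l → l < j → ¬ (rs l).Contains (rs i).fst

/-- Property (P1): the successor pair of every reticulated-cherry pair, if it exists,
is a cherry pair. -/
def SeqP1 (rs : ℕ → Pick) (k : ℕ) : Prop :=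
  ∀ i j, (rs i).IsRetPair → SuccAt rs k i j → (rs j).IsCherryPair

/-- Property (P2): no element of the sequence is the successor pair of two distinct
reticulated-cherry pairs. -/
def SeqP2 (rs : ℕ → Pick) (k : ℕ) : Prop :=
  ∀ i i' j, i ≠ i' → (rs i).IsRetPair → (rs i').IsRetPair →
    SuccAt rs k i j → SuccAt rs k i' j → False

/-- A tree-child cherry-picking sequence: one satisfying (P1) and (P2). -/
def TreeChildSeq (rs : ℕ → Pick) (k : ℕ) : Prop := SeqP1 rs k ∧ SeqP2 rs k

/-- Property (P3): the first coordinate of each pair does not occur as the second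
coordinate of any later pair. -/
def SeqP3 (rs : ℕ → Pick) (k : ℕ) : Prop :=
  ∀ i j, i < j → j < k → (rs i).fst ≠ (rs j).snd

/-- A finite undirected graph whose vertices are natural numbers. -/
structure UNet where
  verts : Finset ℕ
  edges : Finset (Sym2 ℕ)

namespace UNet

/-- degree of a vertex -/
def deg (U : UNet) (v : ℕ) : ℕ := (U.edges.filter (fun e => v ∈ e)).card

/-- adjacency -/
def Adj (U : UNet) (u v : ℕ) : Prop := u ≠ v ∧ s(u, v) ∈ U.edges

/-- connectedness -/
def Connected (U : UNet) : Prop :=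
  ∀ u ∈ U.verts, ∀ v ∈ U.verts, Relation.ReflTransGen U.Adj u v

/-- leaf: degree-1 vertex -/
def IsLeaf (U : UNet) (v : ℕ) : Prop := v ∈ U.verts ∧ U.deg v = 1

/-- the network consists of a single vertex -/
def SingleVertex (U : UNet) : Prop := U.verts.card = 1 ∧ U.edges = ∅

/-- the reticulation number of an unrooted network: `|E| - (|V| - 1)` -/
def retNum (U : UNet) : ℕ := U.edges.card - (U.verts.card - 1)

end UNet

/-- `U` is an unrooted binary phylogenetic network with leaf set `X`
(including the degenerate single-vertex network when `|X| = 1`). -/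
def IsUnrootedBinaryNet (U : UNet) (X : Finset ℕ) : Prop :=
  (∃ x, X = {x} ∧ U.verts = {x} ∧ U.edges = ∅) ∨
  ((∀ e ∈ U.edges, ¬ e.IsDiag ∧ ∀ v ∈ e, v ∈ U.verts) ∧
   U.Connected ∧
   (∀ v ∈ U.verts, U.deg v = 1 ∨ U.deg v = 3) ∧
   (∀ v, U.IsLeaf v ↔ v ∈ X))

/-- `[a,b]` is a cherry of the unrooted network `U`. -/
def UCherry (U : UNet) (a b : ℕ) : Prop :=
  a ≠ b ∧ U.IsLeaf a ∧ U.IsLeaf b ∧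
  ((∃ p, s(a, p) ∈ U.edges ∧ s(b, p) ∈ U.edges ∧ p ≠ a ∧ p ≠ b) ∨ U.edges = {s(a, b)})

/-- the edge `{u,v}` lies on a cycle of `U` -/
def UOnCycle (U : UNet) (u v : ℕ) : Prop :=
  s(u, v) ∈ U.edges ∧
  Relation.ReflTransGen (fun x y => x ≠ y ∧ s(x, y) ∈ U.edges ∧ s(x, y) ≠ s(u, v)) u v

/-- `(a,b)` is a reticulated cherry of the unrooted network `U` with reticulation
edge `{u,v}`. -/
def URetCherry (U : UNet) (a b : ℕ) : Prop :=
  a ≠ b ∧ U.IsLeaf a ∧ U.IsLeaf b ∧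
  ∃ u v, s(a, u) ∈ U.edges ∧ s(u, v) ∈ U.edges ∧ s(v, b) ∈ U.edges ∧
    u ≠ v ∧ u ≠ a ∧ v ≠ b ∧ UOnCycle U u v

/-- `W` is obtained from `U` by reducing the cherry `[a,b]`: delete `a` and, if `U` has
at least two edges, suppress the resulting degree-2 vertex. -/
def UReduceCherry (U W : UNet) (a b : ℕ) : Prop :=
  UCherry U a b ∧
  ((U.edges = {s(a, b)} ∧ W.verts = U.verts \ {a} ∧ W.edges = ∅) ∨
   (∃ p g, s(a, p) ∈ U.edges ∧ s(b, p) ∈ U.edges ∧ s(p, g) ∈ U.edges ∧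
      p ≠ a ∧ p ≠ b ∧ g ≠ a ∧ g ≠ b ∧ g ≠ p ∧
      W.verts = U.verts \ {a, p} ∧
      W.edges = insert s(b, g) (U.edges \ {s(a, p), s(b, p), s(p, g)})))

/-- `W` is obtained from `U` by reducing the reticulated cherry `(a,b)`: delete the
reticulation edge `{u,v}` and suppress the two resulting degree-2 vertices. -/
def UReduceRetCherry (U W : UNet) (a b : ℕ) : Prop :=
  URetCherry U a b ∧
  ∃ u v ga gb, s(a, u) ∈ U.edges ∧ s(u, v) ∈ U.edges ∧ s(v, b) ∈ U.edges ∧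
    u ≠ v ∧ u ≠ a ∧ v ≠ b ∧ UOnCycle U u v ∧
    s(u, ga) ∈ U.edges ∧ ga ≠ a ∧ ga ≠ v ∧ ga ≠ u ∧
    s(v, gb) ∈ U.edges ∧ gb ≠ b ∧ gb ≠ u ∧ gb ≠ v ∧
    W.verts = U.verts \ {u, v} ∧
    W.edges = insert s(a, ga) (insert s(b, gb)
      (U.edges \ {s(u, v), s(a, u), s(u, ga), s(v, b), s(v, gb)}))

/-- The step from `U` to `W` is the cherry reduction recorded by the pick `r`
(unrooted version). -/
def UStep (U W : UNet) : Pick → Prop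
  | .cherry x y => UReduceCherry U W x y
  | .ret x y => UReduceRetCherry U W x y

/-- `(Us 0, …, Us k)` is a cherry-reduction sequence of unrooted networks whose associated
cherry-picking sequence is `(rs 0, …, rs (k-1))`. -/
def UCherrySeq (Us : ℕ → UNet) (rs : ℕ → Pick) (k : ℕ) : Prop :=
  ∀ i < k, UStep (Us i) (Us (i + 1)) (rs i)

/-- `(Us 0, …, Us k)` is a cherry-reduction sequence of unrooted networks. -/
def UReductionSeq (Us : ℕ → UNet) (k : ℕ) : Prop :=
  ∀ i < k, ∃ r, UStep (Us i) (Us (i + 1)) r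

/-- The rooted network `R` is an orientation of the unrooted network `U`: `U` is obtained
from `R` by forgetting arc directions and suppressing the root. -/
def IsOrientationOf (R : DNet) (U : UNet) : Prop :=
  (R.arcs = ∅ ∧ U.edges = ∅ ∧ U.verts = R.verts) ∨
  (∃ ρ c₁ c₂, ρ ∈ R.verts ∧ R.inDeg ρ = 0 ∧ c₁ ≠ c₂ ∧
    (ρ, c₁) ∈ R.arcs ∧ (ρ, c₂) ∈ R.arcs ∧
    U.verts = R.verts.erase ρ ∧
    U.edges = insert s(c₁, c₂)
      ((R.arcs.filter (fun p => p.1 ≠ ρ)).image (fun p => s(p.1, p.2))))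

/-- `U` is an unrooted tree-child network on `X`: it has a tree-child orientation. -/
def UnrootedTreeChild (U : UNet) (X : Finset ℕ) : Prop :=
  ∃ R : DNet, IsRootedBinaryNet R X ∧ R.TreeChild ∧ IsOrientationOf R U

/-- The pick `r` is one of the picks associated with the recorded reduction `p`:
it must agree with `p` on cherry reductions, and may swap the two coordinates of a
reticulated-cherry reduction. -/
def PickAssoc : Pick → Pick → Prop
  | .cherry x y, r => r = .cherry x y
  | .ret x y, r => r = .ret x y ∨ r = .ret y x

/-- `X`-labelled isomorphism of unrooted networks. -/
def UIso (X : Finset ℕ) (U W : UNet) : Prop :=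
  ∃ f : ℕ → ℕ, Set.BijOn f ↑U.verts ↑W.verts ∧ (∀ x ∈ X, f x = x) ∧
    W.edges = U.edges.image (Sym2.map f)

namespace TCProof
open DNet

variable {N : DNet} {u v w p q c d ρ : ℕ}

lemma inDeg_def (N : DNet) (v : ℕ) : N.inDeg v = (N.arcs.filter (fun q => q.2 = v)).card := rfl
lemma outDeg_def (N : DNet) (v : ℕ) : N.outDeg v = (N.arcs.filter (fun q => q.1 = v)).card := rfl

lemma no_parent (h : N.inDeg v = 0) (hp : (u,v) ∈ N.arcs) : False := by
  have h2 : (u,v) ∈ N.arcs.filter (fun p => p.2 = v) := by simp [hp]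
  rw [inDeg_def, Finset.card_eq_zero] at h
  simp [h] at h2

lemma no_child (h : N.outDeg v = 0) (hp : (v,u) ∈ N.arcs) : False := by
  have h2 : (v,u) ∈ N.arcs.filter (fun p => p.1 = v) := by simp [hp]
  rw [outDeg_def, Finset.card_eq_zero] at h
  simp [h] at h2

lemma parent_unique (h : N.inDeg v = 1) (hp : (p,v) ∈ N.arcs) (hq : (q,v) ∈ N.arcs) : q = p := by
  have h2 : ∀ x ∈ N.arcs.filter (fun p => p.2 = v), ∀ y ∈ N.arcs.filter (fun p => p.2 = v), x = y :=
    Finset.card_le_one.mp (le_of_eq h)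
  exact congrArg Prod.fst (h2 (q,v) (by simp [hq]) (p,v) (by simp [hp]))

lemma child_unique (h : N.outDeg v = 1) (hp : (v,c) ∈ N.arcs) (hq : (v,d) ∈ N.arcs) : d = c := by
  have h2 : ∀ x ∈ N.arcs.filter (fun p => p.1 = v), ∀ y ∈ N.arcs.filter (fun p => p.1 = v), x = y :=
    Finset.card_le_one.mp (le_of_eq h)
  exact congrArg Prod.snd (h2 (v,d) (by simp [hq]) (v,c) (by simp [hp]))

lemma exists_parent (h : N.inDeg v ≠ 0) : ∃ p, (p, v) ∈ N.arcs := by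
  rw [inDeg_def] at h
  obtain ⟨⟨x, y⟩, hx⟩ := Finset.card_pos.mp (Nat.pos_of_ne_zero h)
  simp only [Finset.mem_filter] at hx
  exact ⟨x, hx.2 ▸ hx.1⟩

lemma exists_child (h : N.outDeg v ≠ 0) : ∃ c, (v, c) ∈ N.arcs := by
  rw [outDeg_def] at h
  obtain ⟨⟨x, y⟩, hx⟩ := Finset.card_pos.mp (Nat.pos_of_ne_zero h)
  simp only [Finset.mem_filter] at hx
  exact ⟨y, hx.2 ▸ hx.1⟩

lemma parents_two (h : N.inDeg v = 2) (hp : (p,v) ∈ N.arcs) :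
    ∃ q, q ≠ p ∧ (q,v) ∈ N.arcs ∧ ∀ r, (r,v) ∈ N.arcs → r = p ∨ r = q := by
  rw [inDeg_def] at h
  obtain ⟨x, y, hxy, hs⟩ := Finset.card_eq_two.mp h
  have hx2 : x.2 = v ∧ x ∈ N.arcs := by
    have h3 : x ∈ N.arcs.filter (fun p => p.2 = v) := hs ▸ Finset.mem_insert_self x {y}
    simp at h3; tauto
  have hy2 : y.2 = v ∧ y ∈ N.arcs := by
    have h3 : y ∈ N.arcs.filter (fun p => p.2 = v) := hs ▸ by simp
    simp at h3; tauto
  have hpm : (p,v) = x ∨ (p,v) = y := by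
    have h3 : (p,v) ∈ N.arcs.filter (fun p => p.2 = v) := by simp [hp]
    rw [hs] at h3; simpa using h3
  rcases hpm with hpx | hpy
  · refine ⟨y.1, ?_, ?_, ?_⟩
    · intro he; apply hxy; rw [← hpx]; exact Prod.ext he.symm hy2.1.symm
    · rw [show (y.1, v) = y from Prod.ext rfl hy2.1.symm]; exact hy2.2
    · intro r hr
      have h3 : (r,v) ∈ N.arcs.filter (fun p => p.2 = v) := by simp [hr]
      rw [hs] at h3; simp at h3
      rcases h3 with h1 | h1
      · left; rw [← hpx] at h1; exact congrArg Prod.fst h1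
      · right; exact congrArg Prod.fst h1
  · refine ⟨x.1, ?_, ?_, ?_⟩
    · intro he; apply hxy; rw [← hpy]; exact (Prod.ext he.symm hx2.1.symm).symm
    · rw [show (x.1, v) = x from Prod.ext rfl hx2.1.symm]; exact hx2.2
    · intro r hr
      have h3 : (r,v) ∈ N.arcs.filter (fun p => p.2 = v) := by simp [hr]
      rw [hs] at h3; simp at h3
      rcases h3 with h1 | h1
      · right; exact congrArg Prod.fst h1
      · left; rw [← hpy] at h1; exact congrArg Prod.fst h1

lemma children_two (h : N.outDeg v = 2) (hp : (v,c) ∈ N.arcs) :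
    ∃ d, d ≠ c ∧ (v,d) ∈ N.arcs ∧ ∀ e, (v,e) ∈ N.arcs → e = c ∨ e = d := by
  rw [outDeg_def] at h
  obtain ⟨x, y, hxy, hs⟩ := Finset.card_eq_two.mp h
  have hx2 : x.1 = v ∧ x ∈ N.arcs := by
    have h3 : x ∈ N.arcs.filter (fun p => p.1 = v) := hs ▸ Finset.mem_insert_self x {y}
    simp at h3; tauto
  have hy2 : y.1 = v ∧ y ∈ N.arcs := by
    have h3 : y ∈ N.arcs.filter (fun p => p.1 = v) := hs ▸ by simp
    simp at h3; tauto
  have hpm : (v,c) = x ∨ (v,c) = y := by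
    have h3 : (v,c) ∈ N.arcs.filter (fun p => p.1 = v) := by simp [hp]
    rw [hs] at h3; simpa using h3
  rcases hpm with hpx | hpy
  · refine ⟨y.2, ?_, ?_, ?_⟩
    · intro he; apply hxy; rw [← hpx]; exact Prod.ext hy2.1.symm he.symm
    · rw [show (v, y.2) = y from Prod.ext hy2.1.symm rfl]; exact hy2.2
    · intro r hr
      have h3 : (v,r) ∈ N.arcs.filter (fun p => p.1 = v) := by simp [hr]
      rw [hs] at h3; simp at h3
      rcases h3 with h1 | h1
      · left; rw [← hpx] at h1; exact congrArg Prod.snd h1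
      · right; exact congrArg Prod.snd h1
  · refine ⟨x.2, ?_, ?_, ?_⟩
    · intro he; apply hxy; rw [← hpy]; exact (Prod.ext hx2.1.symm he.symm).symm
    · rw [show (v, x.2) = x from Prod.ext hx2.1.symm rfl]; exact hx2.2
    · intro r hr
      have h3 : (v,r) ∈ N.arcs.filter (fun p => p.1 = v) := by simp [hr]
      rw [hs] at h3; simp at h3
      rcases h3 with h1 | h1
      · right; exact congrArg Prod.snd h1
      · left; rw [← hpy] at h1; exact congrArg Prod.snd h1

lemma card_filter_union_sdiff (E s S : Finset (ℕ×ℕ)) (pr : ℕ×ℕ → Prop) [DecidablePred pr]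
    (hS : S ⊆ s) (hE : ∀ e ∈ E, e ∉ s) :
    ((E ∪ (s \ S)).filter pr).card
      = (E.filter pr).card + ((s.filter pr).card - (S.filter pr).card) := by
  rw [Finset.filter_union]
  have hsd : (s \ S).filter pr = s.filter pr \ S.filter pr := by
    ext x; simp only [Finset.mem_filter, Finset.mem_sdiff]; tauto
  rw [Finset.card_union_of_disjoint, hsd, Finset.card_sdiff_of_subset (Finset.filter_subset_filter _ hS)]
  exact Finset.disjoint_left.mpr
    (fun a ha hb => hE a (Finset.mem_filter.mp ha).1
      (Finset.mem_sdiff.mp (Finset.mem_filter.mp hb).1).1)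

lemma transGen_of_transGen_sub {M : DNet}
    (hsub : ∀ x y, M.Arc x y → Relation.TransGen N.Arc x y) :
    ∀ x y, Relation.TransGen M.Arc x y → Relation.TransGen N.Arc x y := by
  intro x y h
  induction h with
  | single h => exact hsub _ _ h
  | tail _ h2 ih => exact ih.trans (hsub _ _ h2)

lemma lemmaA (N : DNet) (X : Finset ℕ)
    (hmem : ∀ x ∈ N.arcs, x.1 ∈ N.verts ∧ x.2 ∈ N.verts)
    (hne : ∀ x ∈ N.arcs, x.1 ≠ x.2)
    (hacy : N.Acyclic)
    (hρ : ∃! ρ, ρ ∈ N.verts ∧ N.inDeg ρ = 0)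
    (hcls : ∀ v ∈ N.verts, N.IsRoot v ∨ N.IsLeaf v ∨ N.IsTreeVertex v ∨ N.IsRet v)
    (hlf : ∀ v, N.IsLeaf v ↔ v ∈ X)
    (htc : N.TreeChild)
    {a b p g : ℕ} (hab : a ≠ b) (ha : N.IsLeaf a) (hb : N.IsLeaf b)
    (hpa : (p,a) ∈ N.arcs) (hpb : (p,b) ∈ N.arcs) (hgp : (g,p) ∈ N.arcs) :
    ∃ M : DNet, RReduceCherry N M a b ∧ IsRootedBinaryNet M (X.erase a) ∧
      M.TreeChild ∧ M.verts.card < N.verts.card := by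
  classical
  obtain ⟨hav, hain, haout⟩ := ha
  obtain ⟨hbv, hbin, hbout⟩ := hb
  have hpv : p ∈ N.verts := (hmem _ hpa).1
  have hpna : p ≠ a := hne _ hpa
  have hpnb : p ≠ b := hne _ hpb
  have hgnp : g ≠ p := hne _ hgp
  have hgv : g ∈ N.verts := (hmem _ hgp).1
  have hgna : g ≠ a := fun h => no_child haout (h ▸ hgp)
  have hgnb : g ≠ b := fun h => no_child hbout (h ▸ hgp)
  have hpT : N.IsTreeVertex p := by
    rcases hcls p hpv with h | h | h | h
    · exact absurd hgp (fun hc => no_parent h.2.1 hc)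
    · exact absurd hpa (fun hc => no_child h.2.2 hc)
    · exact h
    · exact absurd (child_unique h.2.2 hpa hpb) hab.symm
  have hpin : N.inDeg p = 1 := hpT.2.1
  have hpout : N.outDeg p = 2 := hpT.2.2
  have hchl : ∀ e, (p,e) ∈ N.arcs → e = a ∨ e = b := by
    obtain ⟨d, hd1, hd2, hd3⟩ := children_two hpout hpa
    have hdb : d = b := by
      rcases hd3 b hpb with h | h
      · exact absurd h hab.symm
      · exact h.symm
    intro e he; rcases hd3 e he with h | h
    · exact Or.inl h
    · exact Or.inr (hdb ▸ h)
  have hgbn : (g, b) ∉ N.arcs := fun h => hgnp (parent_unique hbin hpb h)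
  set S : Finset (ℕ×ℕ) := {(g,p),(p,a),(p,b)} with hS
  have hSsub : S ⊆ N.arcs := by
    intro x hx
    simp only [hS, Finset.mem_insert, Finset.mem_singleton] at hx
    rcases hx with rfl | rfl | rfl <;> assumption
  set M : DNet := ⟨N.verts \ {a,p}, insert (g,b) (N.arcs \ S)⟩ with hMdef
  have hMv : M.verts = N.verts \ {a,p} := rfl
  have hMa : M.arcs = insert (g,b) (N.arcs \ S) := rfl
  have hMmem : ∀ x : ℕ×ℕ, x ∈ M.arcs ↔ (x = (g,b) ∨ (x ∈ N.arcs ∧ x ∉ S)) := by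
    intro x; rw [hMa]; simp only [Finset.mem_insert, Finset.mem_sdiff]
  have hMvmem : ∀ x : ℕ, x ∈ M.verts ↔ (x ∈ N.verts ∧ x ≠ a ∧ x ≠ p) := by
    intro x; rw [hMv]; simp only [Finset.mem_sdiff, Finset.mem_insert, Finset.mem_singleton]
    tauto
  have hEnot : ∀ e ∈ ({((g : ℕ),(b : ℕ))} : Finset (ℕ×ℕ)), e ∉ N.arcs := by
    intro e he
    rw [Finset.mem_singleton] at he
    subst he; exact hgbn
  have hdeg : ∀ v, v ≠ a → v ≠ p → M.inDeg v = N.inDeg v ∧ M.outDeg v = N.outDeg v := by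
    intro v hva hvp
    have hin := card_filter_union_sdiff {(g,b)} N.arcs S (fun q => q.2 = v) hSsub hEnot
    have hout := card_filter_union_sdiff {(g,b)} N.arcs S (fun q => q.1 = v) hSsub hEnot
    rw [← Finset.insert_eq, ← hMa] at hin hout
    rw [← inDeg_def M v, ← inDeg_def N v] at hin
    rw [← outDeg_def M v, ← outDeg_def N v] at hout
    constructor
    · rw [hin]
      by_cases hvb : v = b
      · have c1 : (({((g:ℕ),(b:ℕ))} : Finset (ℕ×ℕ)).filter (fun q => q.2 = v)).card = 1 := by
          simp [Finset.filter_singleton, hvb]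
        have c2 : (S.filter (fun q => q.2 = v)).card = 1 := by
          rw [hS]
          simp [Finset.filter_insert, Finset.filter_singleton, hvb, hpnb, hab]
        rw [c1, c2, hvb, hbin]
      · have c1 : (({((g:ℕ),(b:ℕ))} : Finset (ℕ×ℕ)).filter (fun q => q.2 = v)).card = 0 := by
          simp [Finset.filter_singleton, Ne.symm hvb]
        have c2 : (S.filter (fun q => q.2 = v)).card = 0 := by
          rw [hS]
          simp [Finset.filter_insert, Finset.filter_singleton, Ne.symm hvp, Ne.symm hva, Ne.symm hvb]
        rw [c1, c2]
        omega
    · rw [hout]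
      by_cases hvg : v = g
      · have c1 : (({((g:ℕ),(b:ℕ))} : Finset (ℕ×ℕ)).filter (fun q => q.1 = v)).card = 1 := by
          simp [Finset.filter_singleton, hvg]
        have c2 : (S.filter (fun q => q.1 = v)).card = 1 := by
          rw [hS]
          simp [Finset.filter_insert, Finset.filter_singleton, hvg, Ne.symm hgnp]
        have hpos : 0 < N.outDeg g := by
          rw [outDeg_def]
          exact Finset.card_pos.mpr ⟨(g,p), by simp [hgp]⟩
        rw [c1, c2, hvg]
        omega
      · have c1 : (({((g:ℕ),(b:ℕ))} : Finset (ℕ×ℕ)).filter (fun q => q.1 = v)).card = 0 := by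
          simp [Finset.filter_singleton, Ne.symm hvg]
        have c2 : (S.filter (fun q => q.1 = v)).card = 0 := by
          rw [hS]
          simp [Finset.filter_insert, Finset.filter_singleton, Ne.symm hvg, Ne.symm hvp]
        rw [c1, c2]
        omega
  refine ⟨M, ?_, ?_, ?_, ?_⟩
  · exact ⟨⟨hab, ⟨hav, hain, haout⟩, ⟨hbv, hbin, hbout⟩, p, hpa, hpb⟩,
      p, hpa, hpb, Or.inr ⟨g, hgp, rfl, rfl⟩⟩
  · refine Or.inr ⟨?_, ?_, ?_, ?_, ?_, ?_⟩
    · -- arcs endpoints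
      rintro ⟨x1, x2⟩ hx
      rcases (hMmem _).mp hx with heq | ⟨hxN, hxS⟩
      · obtain ⟨h1, h2⟩ := Prod.mk.injEq x1 x2 g b ▸ heq
        subst h1; subst h2
        exact ⟨(hMvmem _).mpr ⟨hgv, hgna, hgnp⟩, (hMvmem _).mpr ⟨hbv, Ne.symm hab, Ne.symm hpnb⟩⟩
      · have h1a : x1 ≠ a := by rintro rfl; exact no_child haout hxN
        have h1p : x1 ≠ p := by
          rintro rfl
          rcases hchl _ hxN with rfl | rfl
          · exact hxS (by simp [hS])
          · exact hxS (by simp [hS])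
        have h2a : x2 ≠ a := by
          rintro rfl
          have h4 := parent_unique hain hpa hxN
          exact hxS (by rw [h4]; simp [hS])
        have h2p : x2 ≠ p := by
          rintro rfl
          have h4 := parent_unique hpin hgp hxN
          exact hxS (by rw [h4]; simp [hS])
        exact ⟨(hMvmem x1).mpr ⟨(hmem _ hxN).1, h1a, h1p⟩,
          (hMvmem x2).mpr ⟨(hmem _ hxN).2, h2a, h2p⟩⟩
    · -- no self loops
      rintro ⟨x1, x2⟩ hx
      rcases (hMmem _).mp hx with heq | ⟨hxN, _⟩
      · obtain ⟨h1, h2⟩ := Prod.mk.injEq x1 x2 g b ▸ heq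
        subst h1; subst h2
        exact hgnb
      · exact hne _ hxN
    · -- acyclic
      intro v hv
      apply hacy v
      refine transGen_of_transGen_sub ?_ _ _ hv
      intro x y hxy
      rcases (hMmem (x,y)).mp hxy with heq | h
      · obtain ⟨h1, h2⟩ := Prod.mk.injEq x y g b ▸ heq
        subst h1; subst h2
        exact (Relation.TransGen.single (show N.Arc x p from hgp)).tail hpb
      · exact Relation.TransGen.single h.1
    · -- unique root
      obtain ⟨ρ, ⟨hρv, hρ0⟩, hρu⟩ := hρ
      have hρa : ρ ≠ a := by rintro rfl; rw [hain] at hρ0; omega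
      have hρp : ρ ≠ p := by rintro rfl; rw [hpin] at hρ0; omega
      refine ⟨ρ, ⟨(hMvmem ρ).mpr ⟨hρv, hρa, hρp⟩, (hdeg ρ hρa hρp).1.trans hρ0⟩, ?_⟩
      rintro y ⟨hyv, hy0⟩
      rw [hMvmem] at hyv
      exact hρu y ⟨hyv.1, (hdeg y hyv.2.1 hyv.2.2).1.symm.trans hy0⟩
    · -- classification
      intro v hv
      rw [hMvmem] at hv
      obtain ⟨hv1, hva, hvp⟩ := hv
      have hd := hdeg v hva hvp
      have hvM : v ∈ M.verts := (hMvmem v).mpr ⟨hv1, hva, hvp⟩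
      rcases hcls v hv1 with h | h | h | h
      · exact Or.inl ⟨hvM, hd.1.trans h.2.1, hd.2.trans h.2.2⟩
      · exact Or.inr (Or.inl ⟨hvM, hd.1.trans h.2.1, hd.2.trans h.2.2⟩)
      · exact Or.inr (Or.inr (Or.inl ⟨hvM, hd.1.trans h.2.1, hd.2.trans h.2.2⟩))
      · exact Or.inr (Or.inr (Or.inr ⟨hvM, hd.1.trans h.2.1, hd.2.trans h.2.2⟩))
    · -- leaves
      intro v
      constructor
      · rintro ⟨hvM, h1, h0⟩
        rw [hMvmem] at hvM
        have hd := hdeg v hvM.2.1 hvM.2.2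
        exact Finset.mem_erase.mpr ⟨hvM.2.1,
          (hlf v).mp ⟨hvM.1, hd.1.symm.trans h1, hd.2.symm.trans h0⟩⟩
      · intro hvX
        obtain ⟨hvna, hvX⟩ := Finset.mem_erase.mp hvX
        obtain ⟨hv1, h1, h0⟩ := (hlf v).mpr hvX
        have hvnp : v ≠ p := by rintro rfl; rw [hpout] at h0; omega
        have hd := hdeg v hvna hvnp
        exact ⟨(hMvmem v).mpr ⟨hv1, hvna, hvnp⟩, hd.1.trans h1, hd.2.trans h0⟩
  · -- tree child
    intro v hvM hout
    obtain ⟨hv1, hva, hvp⟩ := (hMvmem v).mp hvM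
    by_cases hvg : v = g
    · subst hvg
      exact ⟨b, (hMmem _).mpr (Or.inl rfl),
        Or.inr ⟨(hMvmem b).mpr ⟨hbv, Ne.symm hab, Ne.symm hpnb⟩,
          (hdeg b (Ne.symm hab) (Ne.symm hpnb)).1.trans hbin,
          (hdeg b (Ne.symm hab) (Ne.symm hpnb)).2.trans hbout⟩⟩
    · have hout' : N.outDeg v ≠ 0 := by rw [← (hdeg v hva hvp).2]; exact hout
      obtain ⟨c, hcarc, hccls⟩ := htc v hv1 hout'
      have hca : c ≠ a := by rintro rfl; exact hvp (parent_unique hain hpa hcarc)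
      have hcp : c ≠ p := by rintro rfl; exact hvg (parent_unique hpin hgp hcarc)
      have harcM : (v,c) ∈ M.arcs := by
        refine (hMmem _).mpr (Or.inr ⟨hcarc, ?_⟩)
        intro hmemS
        simp only [hS, Finset.mem_insert, Finset.mem_singleton, Prod.mk.injEq] at hmemS
        rcases hmemS with ⟨h1,h2⟩ | ⟨h1,h2⟩ | ⟨h1,h2⟩
        exacts [hcp h2, hvp h1, hvp h1]
      have hcM : c ∈ M.verts := (hMvmem c).mpr ⟨(hmem _ hcarc).2, hca, hcp⟩
      have hdc := hdeg c hca hcp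
      rcases hccls with h | h
      · exact ⟨c, harcM, Or.inl ⟨hcM, hdc.1.trans h.2.1, hdc.2.trans h.2.2⟩⟩
      · exact ⟨c, harcM, Or.inr ⟨hcM, hdc.1.trans h.2.1, hdc.2.trans h.2.2⟩⟩
  · -- card
    have hsubv : ({a, p} : Finset ℕ) ⊆ N.verts := by
      intro x hx
      simp only [Finset.mem_insert, Finset.mem_singleton] at hx
      rcases hx with rfl | rfl
      exacts [hav, hpv]
    have hc2 : ({a, p} : Finset ℕ).card = 2 := by
      rw [Finset.card_insert_of_notMem (Finset.notMem_singleton.mpr (Ne.symm hpna)),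
        Finset.card_singleton]
    have hle := Finset.card_le_card hsubv
    rw [hc2] at hle
    rw [hMv, Finset.card_sdiff_of_subset hsubv, hc2]
    omega

lemma lemmaC (N : DNet) (X : Finset ℕ)
    (hmem : ∀ x ∈ N.arcs, x.1 ∈ N.verts ∧ x.2 ∈ N.verts)
    (hne : ∀ x ∈ N.arcs, x.1 ≠ x.2)
    (hacy : N.Acyclic)
    (hρ : ∃! ρ, ρ ∈ N.verts ∧ N.inDeg ρ = 0)
    (hcls : ∀ v ∈ N.verts, N.IsRoot v ∨ N.IsLeaf v ∨ N.IsTreeVertex v ∨ N.IsRet v)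
    (hlf : ∀ v, N.IsLeaf v ↔ v ∈ X)
    (htc : N.TreeChild)
    {a b pa pb qa qb : ℕ} (hab : a ≠ b) (ha : N.IsLeaf a) (hb : N.IsLeaf b)
    (hpaa : (pa,a) ∈ N.arcs) (hpbb : (pb,b) ∈ N.arcs) (hret : N.IsRet pa)
    (hpbpa : (pb,pa) ∈ N.arcs) (hqapa : (qa,pa) ∈ N.arcs) (hqane : qa ≠ pb)
    (hqbpb : (qb,pb) ∈ N.arcs) :
    ∃ M : DNet, RReduceRetCherry N M a b ∧ IsRootedBinaryNet M X ∧
      M.TreeChild ∧ M.verts.card < N.verts.card := by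
  classical
  obtain ⟨hav, hain, haout⟩ := ha
  obtain ⟨hbv, hbin, hbout⟩ := hb
  have hpav : pa ∈ N.verts := (hmem _ hpaa).1
  have hpbv : pb ∈ N.verts := (hmem _ hpbb).1
  have hqav : qa ∈ N.verts := (hmem _ hqapa).1
  have hqbv : qb ∈ N.verts := (hmem _ hqbpb).1
  have hpain : N.inDeg pa = 2 := hret.2.1
  have hpaout : N.outDeg pa = 1 := hret.2.2
  have hpana : pa ≠ a := hne _ hpaa
  have hpbnb : pb ≠ b := hne _ hpbb
  have hpbnpa : pb ≠ pa := hne _ hpbpa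
  have hqanpa : qa ≠ pa := hne _ hqapa
  have hqbnpb : qb ≠ pb := hne _ hqbpb
  have hpanb : pa ≠ b := fun h => no_child hbout (h ▸ hpaa)
  have hpbna : pb ≠ a := fun h => no_child haout (h ▸ hpbb)
  have hqana : qa ≠ a := fun h => no_child haout (h ▸ hqapa)
  have hqanb : qa ≠ b := fun h => no_child hbout (h ▸ hqapa)
  have hqbna : qb ≠ a := fun h => no_child haout (h ▸ hqbpb)
  have hqbnb : qb ≠ b := fun h => no_child hbout (h ▸ hqbpb)
  have hqbnpa : qb ≠ pa := by
    rintro rfl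
    exact hpbna (child_unique hpaout hpaa hqbpb)
  have hpbT : N.IsTreeVertex pb := by
    rcases hcls pb hpbv with h | h | h | h
    · exact absurd hqbpb (fun hc => no_parent h.2.1 hc)
    · exact absurd hpbb (fun hc => no_child h.2.2 hc)
    · exact h
    · exact absurd (child_unique h.2.2 hpbpa hpbb) (Ne.symm hpanb)
  have hpbin : N.inDeg pb = 1 := hpbT.2.1
  have hpbout : N.outDeg pb = 2 := hpbT.2.2
  have hpbchl : ∀ e, (pb,e) ∈ N.arcs → e = pa ∨ e = b := by
    obtain ⟨d, hd1, hd2, hd3⟩ := children_two hpbout hpbpa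
    have hdb : d = b := by
      rcases hd3 b hpbb with h | h
      · exact absurd h (Ne.symm hpanb)
      · exact h.symm
    intro e he; rcases hd3 e he with h | h
    · exact Or.inl h
    · exact Or.inr (hdb ▸ h)
  have hpapar : ∀ r, (r,pa) ∈ N.arcs → r = pb ∨ r = qa := by
    obtain ⟨q, hq1, hq2, hq3⟩ := parents_two hpain hpbpa
    have hqqa : q = qa := by
      rcases hq3 qa hqapa with h | h
      · exact absurd h hqane
      · exact h.symm
    intro r hr; rcases hq3 r hr with h | h
    · exact Or.inl h
    · exact Or.inr (hqqa ▸ h)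
  have hqaout : N.outDeg qa = 2 := by
    rcases hcls qa hqav with h | h | h | h
    · exact h.2.2
    · exact absurd hqapa (fun hc => no_child h.2.2 hc)
    · exact h.2.2
    · exfalso
      obtain ⟨c, hc, hcc⟩ := htc qa hqav (by rw [h.2.2]; omega)
      have hcpa : c = pa := child_unique h.2.2 hqapa hc
      rw [hcpa] at hcc
      rcases hcc with hcc | hcc
      · have := hcc.2.1; omega
      · have := hcc.2.1; omega
  have hqaa_not : (qa, a) ∉ N.arcs := fun h => hqanpa (parent_unique hain hpaa h)
  have hqbb_not : (qb, b) ∉ N.arcs := fun h => hqbnpb (parent_unique hbin hpbb h)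
  set S : Finset (ℕ×ℕ) := {(pb,pa),(pa,a),(qa,pa),(pb,b),(qb,pb)} with hS
  set E : Finset (ℕ×ℕ) := {(qa,a),(qb,b)} with hE
  have hSsub : S ⊆ N.arcs := by
    intro x hx
    simp only [hS, Finset.mem_insert, Finset.mem_singleton] at hx
    rcases hx with rfl | rfl | rfl | rfl | rfl <;> assumption
  have hEnot : ∀ e ∈ E, e ∉ N.arcs := by
    intro e he
    simp only [hE, Finset.mem_insert, Finset.mem_singleton] at he
    rcases he with rfl | rfl
    · exact hqaa_not
    · exact hqbb_not
  set M : DNet := ⟨N.verts \ {pa,pb}, insert (qa,a) (insert (qb,b) (N.arcs \ S))⟩ with hMdef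
  have hMv : M.verts = N.verts \ {pa,pb} := rfl
  have hMa : M.arcs = insert (qa,a) (insert (qb,b) (N.arcs \ S)) := rfl
  have hMau : M.arcs = E ∪ (N.arcs \ S) := by
    rw [hMa, hE]
    ext x
    simp only [Finset.mem_insert, Finset.mem_union, Finset.mem_singleton, Finset.mem_sdiff]
    tauto
  have hMmem : ∀ x : ℕ×ℕ, x ∈ M.arcs ↔ (x = (qa,a) ∨ x = (qb,b) ∨ (x ∈ N.arcs ∧ x ∉ S)) := by
    intro x; rw [hMa]
    simp only [Finset.mem_insert, Finset.mem_sdiff]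
  have hMvmem : ∀ x : ℕ, x ∈ M.verts ↔ (x ∈ N.verts ∧ x ≠ pa ∧ x ≠ pb) := by
    intro x; rw [hMv]
    simp only [Finset.mem_sdiff, Finset.mem_insert, Finset.mem_singleton]
    tauto
  have hdeg : ∀ v, v ≠ pa → v ≠ pb → M.inDeg v = N.inDeg v ∧ M.outDeg v = N.outDeg v := by
    intro v hvpa hvpb
    have hin := card_filter_union_sdiff E N.arcs S (fun q => q.2 = v) hSsub hEnot
    have hout := card_filter_union_sdiff E N.arcs S (fun q => q.1 = v) hSsub hEnot
    rw [← hMau] at hin hout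
    rw [← inDeg_def M v, ← inDeg_def N v] at hin
    rw [← outDeg_def M v, ← outDeg_def N v] at hout
    constructor
    · rw [hin]
      by_cases hva : v = a
      · have c1 : (E.filter (fun q => q.2 = v)).card = 1 := by
          rw [hE]
          simp [Finset.filter_insert, Finset.filter_singleton, hva, hab, Ne.symm hab]
        have c2 : (S.filter (fun q => q.2 = v)).card = 1 := by
          rw [hS]
          simp [Finset.filter_insert, Finset.filter_singleton, hva, hpana, Ne.symm hab,
            hpbna, hqbnpb]
        rw [c1, c2, hva, hain]
      · by_cases hvb : v = b
        · have c1 : (E.filter (fun q => q.2 = v)).card = 1 := by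
            rw [hE]
            simp [Finset.filter_insert, Finset.filter_singleton, hvb, hab]
          have c2 : (S.filter (fun q => q.2 = v)).card = 1 := by
            rw [hS]
            simp [Finset.filter_insert, Finset.filter_singleton, hvb, hpanb, hab, Ne.symm hab,
              hpbnb]
          rw [c1, c2, hvb, hbin]
        · have c1 : (E.filter (fun q => q.2 = v)).card = 0 := by
            rw [hE]
            simp [Finset.filter_insert, Finset.filter_singleton, Ne.symm hva, Ne.symm hvb]
          have c2 : (S.filter (fun q => q.2 = v)).card = 0 := by
            rw [hS]
            simp [Finset.filter_insert, Finset.filter_singleton, Ne.symm hva, Ne.symm hvb,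
              Ne.symm hvpa, Ne.symm hvpb]
          rw [c1, c2]
          omega
    · rw [hout]
      by_cases hvqa : v = qa
      · by_cases hvqb : v = qb
        · have c1 : (E.filter (fun q => q.1 = v)).card = 2 := by
            rw [hE]
            rw [Finset.filter_true_of_mem (by
              intro x hx
              simp only [Finset.mem_insert, Finset.mem_singleton] at hx
              rcases hx with rfl | rfl
              · exact hvqa.symm
              · exact hvqb.symm)]
            rw [Finset.card_insert_of_notMem (by simp [hab]), Finset.card_singleton]
          have c2 : (S.filter (fun q => q.1 = v)).card = 2 := by
            have hqaqb : qa = qb := hvqa ▸ hvqb ▸ rfl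
            rw [hS]
            rw [show (({(pb,pa),(pa,a),(qa,pa),(pb,b),(qb,pb)} : Finset (ℕ×ℕ)).filter
                (fun q => q.1 = v)) = {(qa,pa),(qb,pb)} from ?_]
            · rw [Finset.card_insert_of_notMem (by simp [Ne.symm hpbnpa]), Finset.card_singleton]
            · ext ⟨x1, x2⟩
              simp only [Finset.mem_filter, Finset.mem_insert, Finset.mem_singleton,
                Prod.mk.injEq]
              constructor
              · rintro ⟨h1, h2⟩
                rcases h1 with ⟨e1,e2⟩ | ⟨e1,e2⟩ | ⟨e1,e2⟩ | ⟨e1,e2⟩ | ⟨e1,e2⟩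
                · exfalso; apply hqane; rw [← hvqa, ← h2]; exact e1
                · exfalso; apply hqanpa; rw [← hvqa, ← h2]; exact e1
                · exact Or.inl ⟨e1, e2⟩
                · exfalso; apply hqane; rw [← hvqa, ← h2]; exact e1
                · exact Or.inr ⟨e1, e2⟩
              · rintro (⟨e1,e2⟩ | ⟨e1,e2⟩)
                · exact ⟨Or.inr (Or.inr (Or.inl ⟨e1, e2⟩)), by rw [e1]; exact hvqa.symm⟩
                · exact ⟨Or.inr (Or.inr (Or.inr (Or.inr ⟨e1, e2⟩))), by rw [e1]; exact hvqb.symm⟩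
          rw [c1, c2, hvqa, hqaout]
        · have hne2 : qb ≠ qa := fun h => hvqb (hvqa.trans h.symm)
          have c1 : (E.filter (fun q => q.1 = v)).card = 1 := by
            rw [hE]
            simp [Finset.filter_insert, Finset.filter_singleton, hvqa, hne2]
          have c2 : (S.filter (fun q => q.1 = v)).card = 1 := by
            rw [hS]
            simp [Finset.filter_insert, Finset.filter_singleton, hvqa, Ne.symm hqane,
              Ne.symm hqanpa, hne2]
          rw [c1, c2, hvqa, hqaout]
      · by_cases hvqb : v = qb
        · have hne3 : qa ≠ qb := fun h => hvqa (hvqb.trans h.symm)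
          have c1 : (E.filter (fun q => q.1 = v)).card = 1 := by
            rw [hE]
            simp [Finset.filter_insert, Finset.filter_singleton, hvqb, hne3]
          have c2 : (S.filter (fun q => q.1 = v)).card = 1 := by
            rw [hS]
            simp [Finset.filter_insert, Finset.filter_singleton, hvqb, hne3,
              Ne.symm hqbnpa, Ne.symm hqbnpb]
          have hpos : 0 < N.outDeg qb := by
            rw [outDeg_def]
            exact Finset.card_pos.mpr ⟨(qb,pb), by simp [hqbpb]⟩
          rw [c1, c2, hvqb]
          omega
        · have c1 : (E.filter (fun q => q.1 = v)).card = 0 := by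
            rw [hE]
            simp [Finset.filter_insert, Finset.filter_singleton, Ne.symm hvqa, Ne.symm hvqb]
          have c2 : (S.filter (fun q => q.1 = v)).card = 0 := by
            rw [hS]
            simp [Finset.filter_insert, Finset.filter_singleton, Ne.symm hvqa, Ne.symm hvqb,
              Ne.symm hvpa, Ne.symm hvpb]
          rw [c1, c2]
          omega
  refine ⟨M, ?_, ?_, ?_, ?_⟩
  · exact ⟨⟨hab, ⟨hav, hain, haout⟩, ⟨hbv, hbin, hbout⟩, pa, pb, hpaa, hpbb, hret, hpbpa⟩,
      pa, pb, qa, qb, hpaa, hpbb, hret, hpbpa, hqapa, hqane, hqbpb, rfl, rfl⟩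
  · refine Or.inr ⟨?_, ?_, ?_, ?_, ?_, ?_⟩
    · rintro ⟨x1, x2⟩ hx
      rcases (hMmem _).mp hx with heq | heq | ⟨hxN, hxS⟩
      · obtain ⟨h1, h2⟩ := Prod.mk.injEq x1 x2 qa a ▸ heq
        subst h1; subst h2
        exact ⟨(hMvmem _).mpr ⟨hqav, hqanpa, hqane⟩, (hMvmem _).mpr ⟨hav, Ne.symm hpana, Ne.symm hpbna⟩⟩
      · obtain ⟨h1, h2⟩ := Prod.mk.injEq x1 x2 qb b ▸ heq
        subst h1; subst h2
        exact ⟨(hMvmem _).mpr ⟨hqbv, hqbnpa, hqbnpb⟩, (hMvmem _).mpr ⟨hbv, Ne.symm hpanb, Ne.symm hpbnb⟩⟩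
      · have h1pa : x1 ≠ pa := by
          rintro rfl
          have h4 := child_unique hpaout hpaa hxN
          exact hxS (by rw [h4]; simp [hS])
        have h1pb : x1 ≠ pb := by
          rintro rfl
          rcases hpbchl _ hxN with rfl | rfl
          · exact hxS (by simp [hS])
          · exact hxS (by simp [hS])
        have h2pa : x2 ≠ pa := by
          rintro rfl
          rcases hpapar _ hxN with rfl | rfl
          · exact hxS (by simp [hS])
          · exact hxS (by simp [hS])
        have h2pb : x2 ≠ pb := by
          rintro rfl
          have h4 := parent_unique hpbin hqbpb hxN
          exact hxS (by rw [h4]; simp [hS])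
        exact ⟨(hMvmem x1).mpr ⟨(hmem _ hxN).1, h1pa, h1pb⟩,
          (hMvmem x2).mpr ⟨(hmem _ hxN).2, h2pa, h2pb⟩⟩
    · rintro ⟨x1, x2⟩ hx
      rcases (hMmem _).mp hx with heq | heq | ⟨hxN, _⟩
      · obtain ⟨h1, h2⟩ := Prod.mk.injEq x1 x2 qa a ▸ heq
        subst h1; subst h2
        exact hqana
      · obtain ⟨h1, h2⟩ := Prod.mk.injEq x1 x2 qb b ▸ heq
        subst h1; subst h2
        exact hqbnb
      · exact hne _ hxN
    · intro v hv
      apply hacy v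
      refine transGen_of_transGen_sub ?_ _ _ hv
      intro x y hxy
      rcases (hMmem (x,y)).mp hxy with heq | heq | h
      · obtain ⟨h1, h2⟩ := Prod.mk.injEq x y qa a ▸ heq
        subst h1; subst h2
        exact (Relation.TransGen.single (show N.Arc x pa from hqapa)).tail hpaa
      · obtain ⟨h1, h2⟩ := Prod.mk.injEq x y qb b ▸ heq
        subst h1; subst h2
        exact (Relation.TransGen.single (show N.Arc x pb from hqbpb)).tail hpbb
      · exact Relation.TransGen.single h.1
    · obtain ⟨ρ, ⟨hρv, hρ0⟩, hρu⟩ := hρ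
      have hρpa : ρ ≠ pa := by rintro rfl; rw [hpain] at hρ0; omega
      have hρpb : ρ ≠ pb := by rintro rfl; rw [hpbin] at hρ0; omega
      refine ⟨ρ, ⟨(hMvmem ρ).mpr ⟨hρv, hρpa, hρpb⟩, (hdeg ρ hρpa hρpb).1.trans hρ0⟩, ?_⟩
      rintro y ⟨hyv, hy0⟩
      rw [hMvmem] at hyv
      exact hρu y ⟨hyv.1, (hdeg y hyv.2.1 hyv.2.2).1.symm.trans hy0⟩
    · intro v hv
      rw [hMvmem] at hv
      obtain ⟨hv1, hvpa, hvpb⟩ := hv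
      have hd := hdeg v hvpa hvpb
      have hvM : v ∈ M.verts := (hMvmem v).mpr ⟨hv1, hvpa, hvpb⟩
      rcases hcls v hv1 with h | h | h | h
      · exact Or.inl ⟨hvM, hd.1.trans h.2.1, hd.2.trans h.2.2⟩
      · exact Or.inr (Or.inl ⟨hvM, hd.1.trans h.2.1, hd.2.trans h.2.2⟩)
      · exact Or.inr (Or.inr (Or.inl ⟨hvM, hd.1.trans h.2.1, hd.2.trans h.2.2⟩))
      · exact Or.inr (Or.inr (Or.inr ⟨hvM, hd.1.trans h.2.1, hd.2.trans h.2.2⟩))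
    · intro v
      constructor
      · rintro ⟨hvM, h1, h0⟩
        rw [hMvmem] at hvM
        have hd := hdeg v hvM.2.1 hvM.2.2
        exact (hlf v).mp ⟨hvM.1, hd.1.symm.trans h1, hd.2.symm.trans h0⟩
      · intro hvX
        obtain ⟨hv1, h1, h0⟩ := (hlf v).mpr hvX
        have hvnpa : v ≠ pa := by rintro rfl; rw [hpaout] at h0; omega
        have hvnpb : v ≠ pb := by rintro rfl; rw [hpbout] at h0; omega
        have hd := hdeg v hvnpa hvnpb
        exact ⟨(hMvmem v).mpr ⟨hv1, hvnpa, hvnpb⟩, hd.1.trans h1, hd.2.trans h0⟩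
  · intro v hvM hout
    obtain ⟨hv1, hvpa, hvpb⟩ := (hMvmem v).mp hvM
    by_cases hvqb : v = qb
    · refine ⟨b, (hMmem _).mpr (Or.inr (Or.inl (by rw [hvqb]))), Or.inr
        ⟨(hMvmem b).mpr ⟨hbv, Ne.symm hpanb, Ne.symm hpbnb⟩,
          (hdeg b (Ne.symm hpanb) (Ne.symm hpbnb)).1.trans hbin,
          (hdeg b (Ne.symm hpanb) (Ne.symm hpbnb)).2.trans hbout⟩⟩
    · have hout' : N.outDeg v ≠ 0 := by rw [← (hdeg v hvpa hvpb).2]; exact hout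
      obtain ⟨c, hcarc, hccls⟩ := htc v hv1 hout'
      have hcnpa : c ≠ pa := by
        rintro rfl
        rcases hccls with h | h
        · have := h.2.1; omega
        · have := h.2.1; omega
      have hcnpb : c ≠ pb := by
        rintro rfl
        exact hvqb (parent_unique hpbin hqbpb hcarc)
      have harcM : (v,c) ∈ M.arcs := by
        refine (hMmem _).mpr (Or.inr (Or.inr ⟨hcarc, ?_⟩))
        intro hmemS
        simp only [hS, Finset.mem_insert, Finset.mem_singleton, Prod.mk.injEq] at hmemS
        rcases hmemS with ⟨e1,e2⟩ | ⟨e1,e2⟩ | ⟨e1,e2⟩ | ⟨e1,e2⟩ | ⟨e1,e2⟩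
        exacts [hvpb e1, hvpa e1, hcnpa e2, hvpb e1, hcnpb e2]
      have hcM : c ∈ M.verts := (hMvmem c).mpr ⟨(hmem _ hcarc).2, hcnpa, hcnpb⟩
      have hdc := hdeg c hcnpa hcnpb
      rcases hccls with h | h
      · exact ⟨c, harcM, Or.inl ⟨hcM, hdc.1.trans h.2.1, hdc.2.trans h.2.2⟩⟩
      · exact ⟨c, harcM, Or.inr ⟨hcM, hdc.1.trans h.2.1, hdc.2.trans h.2.2⟩⟩
  · have hsubv : ({pa, pb} : Finset ℕ) ⊆ N.verts := by
      intro x hx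
      simp only [Finset.mem_insert, Finset.mem_singleton] at hx
      rcases hx with rfl | rfl
      exacts [hpav, hpbv]
    have hc2 : ({pa, pb} : Finset ℕ).card = 2 := by
      rw [Finset.card_insert_of_notMem (Finset.notMem_singleton.mpr (Ne.symm hpbnpa)),
        Finset.card_singleton]
    have hle := Finset.card_le_card hsubv
    rw [hc2] at hle
    rw [hMv, Finset.card_sdiff_of_subset hsubv, hc2]
    omega

lemma chain_nodup (hacy : N.Acyclic) {l : List ℕ}
    (hl : l.Chain' (fun u v => N.Arc v u)) : l.Nodup := by
  haveI : IsTrans ℕ (fun u v => Relation.TransGen N.Arc v u) :=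
    ⟨fun _ _ _ hab hbc => hbc.trans hab⟩
  have h1 : l.Chain' (fun u v => Relation.TransGen N.Arc v u) :=
    List.IsChain.imp (S := fun u v => Relation.TransGen N.Arc v u)
      (fun _ _ h => Relation.TransGen.single h) hl
  have h2 := List.isChain_iff_pairwise.mp h1
  exact h2.imp (fun {a b} h => by rintro rfl; exact hacy a h)

lemma chain_length_le (hacy : N.Acyclic) {l : List ℕ}
    (hl : l.Chain' (fun u v => N.Arc v u)) (hm : ∀ v ∈ l, v ∈ N.verts) :
    l.length ≤ N.verts.card := by
  have hnd := chain_nodup hacy hl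
  rw [← List.toFinset_card_of_nodup hnd]
  exact Finset.card_le_card (fun x hx => hm x (List.mem_toFinset.mp hx))

lemma transGen_chain (hmem : ∀ x ∈ N.arcs, x.1 ∈ N.verts ∧ x.2 ∈ N.verts)
    (h : Relation.TransGen N.Arc u w) :
    ∃ t, List.Chain' (fun x y => N.Arc y x) (w :: (t ++ [u])) ∧
      ∀ v ∈ w :: (t ++ [u]), v ∈ N.verts := by
  induction h with
  | single h =>
      exact ⟨[], by simpa [List.Chain'] using h, by
        intro v hv; simp at hv
        rcases hv with rfl | rfl
        exacts [(hmem _ h).2, (hmem _ h).1]⟩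
  | tail h1 h2 ih =>
      obtain ⟨t, ht, htm⟩ := ih
      rename_i b c
      refine ⟨b :: t, ?_, ?_⟩
      · simpa [List.Chain', List.isChain_cons_cons] using And.intro h2 ht
      · intro v hv
        simp at hv
        rcases hv with rfl | hv
        · exact (hmem _ h2).2
        · exact htm v (by simpa using hv)

lemma reach (hmem : ∀ x ∈ N.arcs, x.1 ∈ N.verts ∧ x.2 ∈ N.verts) (hacy : N.Acyclic)
    (huniq : ∀ v ∈ N.verts, N.inDeg v = 0 → v = ρ) :
    ∀ v ∈ N.verts, Relation.ReflTransGen N.Arc ρ v := by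
  classical
  set μ : ℕ → ℕ := fun v => (N.verts.filter fun u => Relation.TransGen N.Arc u v).card with hμ
  have hdec : ∀ w v, (w, v) ∈ N.arcs → μ w < μ v := by
    intro w v hwv
    apply Finset.card_lt_card
    constructor
    · intro x hx
      simp only [Finset.mem_filter] at hx ⊢
      exact ⟨hx.1, hx.2.tail hwv⟩
    · intro hsub
      have hw : w ∈ N.verts.filter fun u => Relation.TransGen N.Arc u v :=
        Finset.mem_filter.mpr ⟨(hmem _ hwv).1, Relation.TransGen.single hwv⟩
      have h5 := hsub hw
      simp only [Finset.mem_filter] at h5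
      exact hacy w h5.2
  have key : ∀ n, ∀ v ∈ N.verts, μ v < n → Relation.ReflTransGen N.Arc ρ v := by
    intro n
    induction n with
    | zero => intro v _ h; omega
    | succ n ih =>
        intro v hv hlt
        by_cases h0 : N.inDeg v = 0
        · rw [huniq v hv h0]
        · obtain ⟨w, hw⟩ := exists_parent h0
          have h6 := hdec w v hw
          exact (ih w (hmem _ hw).1 (by omega)).tail hw
  intro v hv
  exact key (μ v + 1) v hv (Nat.lt_succ_self _)

lemma leaf_of_out_zero
    (hcls : ∀ v ∈ N.verts, N.IsRoot v ∨ N.IsLeaf v ∨ N.IsTreeVertex v ∨ N.IsRet v)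
    (hv : v ∈ N.verts) (h0 : N.outDeg v = 0) : N.IsLeaf v := by
  rcases hcls v hv with h | h | h | h
  · rw [h.2.2] at h0; omega
  · exact h
  · rw [h.2.2] at h0; omega
  · rw [h.2.2] at h0; omega

lemma lemmaB (N : DNet) (X : Finset ℕ)
    (hmem : ∀ x ∈ N.arcs, x.1 ∈ N.verts ∧ x.2 ∈ N.verts)
    (hne : ∀ x ∈ N.arcs, x.1 ≠ x.2)
    (hacy : N.Acyclic)
    (hρ : ∃! ρ, ρ ∈ N.verts ∧ N.inDeg ρ = 0)
    (hcls : ∀ v ∈ N.verts, N.IsRoot v ∨ N.IsLeaf v ∨ N.IsTreeVertex v ∨ N.IsRet v)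
    {a b r : ℕ} (hab : a ≠ b) (ha : N.IsLeaf a) (hb : N.IsLeaf b)
    (hpa : (r,a) ∈ N.arcs) (hpb : (r,b) ∈ N.arcs) (hr0 : N.inDeg r = 0) :
    ∃ M : DNet, RReduceCherry N M a b ∧ IsRootedBinaryNet M {b} ∧
      M.TreeChild ∧ M.verts.card < N.verts.card := by
  classical
  obtain ⟨hav, hain, haout⟩ := ha
  obtain ⟨hbv, hbin, hbout⟩ := hb
  have hrv : r ∈ N.verts := (hmem _ hpa).1
  have hrna : r ≠ a := hne _ hpa
  have hrnb : r ≠ b := hne _ hpb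
  have hrout : N.outDeg r = 2 := by
    rcases hcls r hrv with h | h | h | h
    · exact h.2.2
    · exact absurd hpa (fun hc => no_child h.2.2 hc)
    · rw [h.2.1] at hr0; omega
    · rw [h.2.1] at hr0; omega
  have hchl : ∀ e, (r,e) ∈ N.arcs → e = a ∨ e = b := by
    obtain ⟨d, hd1, hd2, hd3⟩ := children_two hrout hpa
    have hdb : d = b := by
      rcases hd3 b hpb with h | h
      · exact absurd h hab.symm
      · exact h.symm
    intro e he; rcases hd3 e he with h | h
    · exact Or.inl h
    · exact Or.inr (hdb ▸ h)
  have hu : ∀ v ∈ N.verts, N.inDeg v = 0 → v = r := by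
    obtain ⟨ρ', _, hρu⟩ := hρ
    intro v hv h0
    rw [hρu v ⟨hv, h0⟩, hρu r ⟨hrv, hr0⟩]
  have hreach := reach hmem hacy hu
  have hverts : N.verts = {r, a, b} := by
    apply Finset.Subset.antisymm
    · intro v hv
      rcases (hreach v hv).cases_head with rfl | ⟨c, hc, hcv⟩
      · simp
      · have hcab : c = a ∨ c = b := hchl c hc
        have hcleaf : N.outDeg c = 0 := by
          rcases hcab with rfl | rfl
          exacts [haout, hbout]
        rcases hcv.cases_head with rfl | ⟨e, he, _⟩
        · simp only [Finset.mem_insert, Finset.mem_singleton]; tauto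
        · exact absurd he (fun hc' => no_child hcleaf hc')
    · intro v hv
      simp only [Finset.mem_insert, Finset.mem_singleton] at hv
      rcases hv with rfl | rfl | rfl
      exacts [hrv, hav, hbv]
  have harcs : N.arcs = {(r,a),(r,b)} := by
    apply Finset.Subset.antisymm
    · rintro ⟨u, w⟩ hu'
      have hu1 : u ∈ N.verts := (hmem _ hu').1
      rw [hverts] at hu1
      simp only [Finset.mem_insert, Finset.mem_singleton] at hu1
      rcases hu1 with rfl | rfl | rfl
      · rcases hchl w hu' with rfl | rfl <;> simp
      · exact absurd hu' (fun hc => no_child haout hc)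
      · exact absurd hu' (fun hc => no_child hbout hc)
    · intro x hx
      simp only [Finset.mem_insert, Finset.mem_singleton] at hx
      rcases hx with rfl | rfl <;> assumption
  set M : DNet := ⟨N.verts \ {a, r}, N.arcs \ {(r,a),(r,b)}⟩ with hMdef
  have hMv : M.verts = {b} := by
    show N.verts \ {a, r} = {b}
    rw [hverts]
    ext z
    simp only [Finset.mem_sdiff, Finset.mem_insert, Finset.mem_singleton]
    constructor
    · rintro ⟨rfl | rfl | rfl, h2⟩ <;> tauto
    · rintro rfl
      refine ⟨Or.inr (Or.inr rfl), ?_⟩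
      push_neg
      exact ⟨Ne.symm hab, Ne.symm hrnb⟩
  have hMa : M.arcs = ∅ := by
    show N.arcs \ {(r,a),(r,b)} = ∅
    rw [harcs, Finset.sdiff_self]
  refine ⟨M, ?_, ?_, ?_, ?_⟩
  · exact ⟨⟨hab, ⟨hav, hain, haout⟩, ⟨hbv, hbin, hbout⟩, r, hpa, hpb⟩,
      r, hpa, hpb, Or.inl ⟨hr0, rfl, rfl⟩⟩
  · exact Or.inl ⟨b, rfl, hMv, hMa⟩
  · intro v hv hout
    exfalso
    apply hout
    rw [outDeg_def, hMa]
    simp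
  · rw [hMv, hverts, Finset.card_singleton]
    rw [Finset.card_insert_of_notMem, Finset.card_insert_of_notMem, Finset.card_singleton]
    · omega
    · simp only [Finset.mem_singleton]; exact hab
    · simp only [Finset.mem_insert, Finset.mem_singleton]
      push_neg
      exact ⟨hrna, hrnb⟩

lemma exists_step (N : DNet) (X : Finset ℕ)
    (hmem : ∀ x ∈ N.arcs, x.1 ∈ N.verts ∧ x.2 ∈ N.verts)
    (hne : ∀ x ∈ N.arcs, x.1 ≠ x.2)
    (hacy : N.Acyclic)
    (hρEU : ∃! ρ, ρ ∈ N.verts ∧ N.inDeg ρ = 0)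
    (hcls : ∀ v ∈ N.verts, N.IsRoot v ∨ N.IsLeaf v ∨ N.IsTreeVertex v ∨ N.IsRet v)
    (hlf : ∀ v, N.IsLeaf v ↔ v ∈ X)
    (htc : N.TreeChild) :
    ∃ (M : DNet) (X' : Finset ℕ) (r : Pick), RStep N M r ∧ IsRootedBinaryNet M X' ∧
      M.TreeChild ∧ M.verts.card < N.verts.card := by
  classical
  obtain ⟨ρ, ⟨hρv, hρ0⟩, hρu⟩ := hρEU
  have hρEU' : ∃! ρ', ρ' ∈ N.verts ∧ N.inDeg ρ' = 0 := ⟨ρ, ⟨hρv, hρ0⟩, hρu⟩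
  have hu : ∀ v ∈ N.verts, N.inDeg v = 0 → v = ρ := fun v hv h0 => hρu v ⟨hv, h0⟩
  have hρout : N.outDeg ρ = 2 := by
    rcases hcls ρ hρv with h | h | h | h
    · exact h.2.2
    · rw [h.2.1] at hρ0; omega
    · rw [h.2.1] at hρ0; omega
    · rw [h.2.1] at hρ0; omega
  obtain ⟨c1, hc1⟩ : ∃ c, (ρ, c) ∈ N.arcs := exists_child (by rw [hρout]; omega)
  set P : ℕ → Prop :=
    fun n => ∃ l : List ℕ, l.Chain' (fun u v => N.Arc v u) ∧ (∀ v ∈ l, v ∈ N.verts) ∧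
      l ≠ [] ∧ l.length = n with hP
  have hP2 : P 2 := by
    refine ⟨[c1, ρ], ?_, ?_, by simp, by simp⟩
    · rw [List.Chain', List.isChain_cons_cons]
      exact ⟨hc1, List.isChain_singleton ρ⟩
    · intro v hv
      simp at hv
      rcases hv with rfl | rfl
      exacts [(hmem _ hc1).2, hρv]
  have hbound : ∀ n, P n → n ≤ N.verts.card := by
    rintro n ⟨l, hcl, hml, _, rfl⟩
    exact chain_length_le hacy hcl hml
  set m := Nat.findGreatest P N.verts.card with hm'
  have hm : P m := Nat.findGreatest_spec (hbound 2 hP2) hP2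
  have hm2 : 2 ≤ m := Nat.le_findGreatest (hbound 2 hP2) hP2
  have hmax : ∀ l : List ℕ, l.Chain' (fun u v => N.Arc v u) → (∀ v ∈ l, v ∈ N.verts) →
      l ≠ [] → l.length ≤ m := by
    intro l hc hm0 hn0
    by_contra hgt
    push_neg at hgt
    exact Nat.findGreatest_is_greatest hgt (hbound _ ⟨l, hc, hm0, hn0, rfl⟩)
      ⟨l, hc, hm0, hn0, rfl⟩
  obtain ⟨l, hcl, hml, hnl, hlenl⟩ := hm
  obtain ⟨x, l1, rfl⟩ := List.exists_cons_of_ne_nil hnl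
  have hl1ne : l1 ≠ [] := by
    rintro rfl
    simp at hlenl
    omega
  obtain ⟨p, t, rfl⟩ := List.exists_cons_of_ne_nil hl1ne
  have hlent : t.length + 2 = m := by simpa using hlenl
  have harc_px : (p, x) ∈ N.arcs := (List.isChain_cons_cons.mp hcl).1
  have hclpt : (p :: t).Chain' (fun u v => N.Arc v u) := (List.isChain_cons_cons.mp hcl).2
  have hxv : x ∈ N.verts := hml x (by simp)
  have hpv : p ∈ N.verts := hml p (by simp)
  have hpnx : p ≠ x := hne _ harc_px
  have houtx : N.outDeg x = 0 := by
    by_contra h0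
    obtain ⟨c, hc⟩ := exists_child h0
    have hch : (c :: x :: p :: t).Chain' (fun u v => N.Arc v u) := by
      rw [List.Chain', List.isChain_cons_cons]
      exact ⟨hc, hcl⟩
    have hle := hmax _ hch (by
      intro v hv
      rcases List.mem_cons.mp hv with rfl | hv
      · exact (hmem _ hc).2
      · exact hml v hv) (by simp)
    simp at hle
    omega
  have hlx : N.IsLeaf x := leaf_of_out_zero hcls hxv houtx
  have houtp : N.outDeg p ≠ 0 := fun h => no_child h harc_px
  rcases hcls p hpv with hrootp | hleafp | htreep | hretp
  · -- p is the root: cherry at root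
    obtain ⟨c, hcx, hcarc, _⟩ := children_two hrootp.2.2 harc_px
    have houtc : N.outDeg c = 0 := by
      by_contra h0
      obtain ⟨d, hd⟩ := exists_child h0
      have hch : (d :: c :: p :: t).Chain' (fun u v => N.Arc v u) := by
        rw [List.Chain', List.isChain_cons_cons, List.isChain_cons_cons]
        exact ⟨hd, hcarc, hclpt⟩
      have hle := hmax _ hch (by
        intro v hv
        rcases List.mem_cons.mp hv with rfl | hv
        · exact (hmem _ hd).2
        rcases List.mem_cons.mp hv with rfl | hv
        · exact (hmem _ hcarc).2
        · exact hml v (List.mem_cons_of_mem x hv)) (by simp)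
      simp at hle
      omega
    have hlc : N.IsLeaf c := leaf_of_out_zero hcls (hmem _ hcarc).2 houtc
    obtain ⟨M, red, bin, tc, lt⟩ := lemmaB N X hmem hne hacy hρEU' hcls
      (Ne.symm hcx) hlx hlc harc_px hcarc hrootp.2.1
    exact ⟨M, {c}, Pick.cherry x c, red, bin, tc, lt⟩
  · exact absurd hleafp.2.2 (fun h => no_child h harc_px)
  · -- p is a tree vertex: ordinary cherry
    obtain ⟨c, hcx, hcarc, _⟩ := children_two htreep.2.2 harc_px
    have houtc : N.outDeg c = 0 := by
      by_contra h0
      obtain ⟨d, hd⟩ := exists_child h0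
      have hch : (d :: c :: p :: t).Chain' (fun u v => N.Arc v u) := by
        rw [List.Chain', List.isChain_cons_cons, List.isChain_cons_cons]
        exact ⟨hd, hcarc, hclpt⟩
      have hle := hmax _ hch (by
        intro v hv
        rcases List.mem_cons.mp hv with rfl | hv
        · exact (hmem _ hd).2
        rcases List.mem_cons.mp hv with rfl | hv
        · exact (hmem _ hcarc).2
        · exact hml v (List.mem_cons_of_mem x hv)) (by simp)
      simp at hle
      omega
    have hlc : N.IsLeaf c := leaf_of_out_zero hcls (hmem _ hcarc).2 houtc
    obtain ⟨g, hg⟩ := exists_parent (show N.inDeg p ≠ 0 by rw [htreep.2.1]; omega)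
    obtain ⟨M, red, bin, tc, lt⟩ := lemmaA N X hmem hne hacy hρEU' hcls hlf htc
      (Ne.symm hcx) hlx hlc harc_px hcarc hg
    exact ⟨M, X.erase x, Pick.cherry x c, red, bin, tc, lt⟩
  · -- p is a reticulation
    have ht : t ≠ [] := by
      rintro rfl
      obtain ⟨q0, hq0⟩ := exists_parent (show N.inDeg p ≠ 0 by rw [hretp.2.1]; omega)
      have hch : ([x, p, q0]).Chain' (fun u v => N.Arc v u) := by
        rw [List.Chain', List.isChain_cons_cons, List.isChain_cons_cons]
        exact ⟨harc_px, hq0, List.isChain_singleton q0⟩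
      have hle := hmax _ hch (by
        intro v hv
        simp at hv
        rcases hv with rfl | rfl | rfl
        exacts [hxv, hpv, (hmem _ hq0).1]) (by simp)
      simp at hle
      simp at hlent
      omega
    obtain ⟨q, t', rfl⟩ := List.exists_cons_of_ne_nil ht
    have hlent' : t'.length + 3 = m := by simpa using hlent
    have harc_qp : (q, p) ∈ N.arcs := (List.isChain_cons_cons.mp hclpt).1
    have hclqt : (q :: t').Chain' (fun u v => N.Arc v u) := (List.isChain_cons_cons.mp hclpt).2
    have hqv : q ∈ N.verts := hml q (by simp)
    have hqnp : q ≠ p := hne _ harc_qp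
    have houtq : N.outDeg q = 2 := by
      rcases hcls q hqv with h | h | h | h
      · exact h.2.2
      · exact absurd harc_qp (fun hc => no_child h.2.2 hc)
      · exact h.2.2
      · exfalso
        obtain ⟨c0, hc0, hcls0⟩ := htc q hqv (by rw [h.2.2]; omega)
        have hc0p := child_unique h.2.2 harc_qp hc0
        rw [hc0p] at hcls0
        have hpin2 := hretp.2.1
        rcases hcls0 with h1 | h1
        · have := h1.2.1; omega
        · have := h1.2.1; omega
    obtain ⟨c, hcp, hcarc, hall⟩ := children_two houtq harc_qp
    have hcls_c : N.IsTreeVertex c ∨ N.IsLeaf c := by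
      obtain ⟨c0, hc0, hcls0⟩ := htc q hqv (by rw [houtq]; omega)
      rcases hall c0 hc0 with h1 | h1
      · exfalso
        rw [h1] at hcls0
        have hpin2 := hretp.2.1
        rcases hcls0 with h2 | h2
        · have := h2.2.1; omega
        · have := h2.2.1; omega
      · rw [h1] at hcls0
        exact hcls0
    rcases hcls_c with htreec | hleafc
    · -- cherry below the tree vertex c
      have hkleaf : ∀ d, (c, d) ∈ N.arcs → N.IsLeaf d := by
        intro d hd
        have houtd : N.outDeg d = 0 := by
          by_contra h0
          obtain ⟨e, he⟩ := exists_child h0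
          have hch : (e :: d :: c :: q :: t').Chain' (fun u v => N.Arc v u) := by
            rw [List.Chain', List.isChain_cons_cons, List.isChain_cons_cons, List.isChain_cons_cons]
            exact ⟨he, hd, hcarc, hclqt⟩
          have hle := hmax _ hch (by
            intro v hv
            rcases List.mem_cons.mp hv with rfl | hv
            · exact (hmem _ he).2
            rcases List.mem_cons.mp hv with rfl | hv
            · exact (hmem _ hd).2
            rcases List.mem_cons.mp hv with rfl | hv
            · exact (hmem _ hcarc).2
            · exact hml v (List.mem_cons_of_mem x (List.mem_cons_of_mem p hv))) (by simp)
          simp at hle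
          omega
        exact leaf_of_out_zero hcls (hmem _ hd).2 houtd
      obtain ⟨d1, hd1⟩ := exists_child (show N.outDeg c ≠ 0 by rw [htreec.2.2]; omega)
      obtain ⟨d2, hd21, hd2arc, _⟩ := children_two htreec.2.2 hd1
      obtain ⟨M, red, bin, tc, lt⟩ := lemmaA N X hmem hne hacy hρEU' hcls hlf htc
        (Ne.symm hd21) (hkleaf d1 hd1) (hkleaf d2 hd2arc) hd1 hd2arc hcarc
      exact ⟨M, X.erase d1, Pick.cherry d1 d2, red, bin, tc, lt⟩
    · -- reticulated cherry
      obtain ⟨qa, hqa_ne, hqaarc, _⟩ := parents_two hretp.2.1 harc_qp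
      have hxc : x ≠ c := by
        rintro rfl
        exact hqnp (parent_unique hlx.2.1 harc_px hcarc)
      by_cases hq0 : N.inDeg q = 0
      · -- q is the root: impossible
        exfalso
        have hqρ : q = ρ := hu q hqv hq0
        have ht' : t' = [] := by
          cases t' with
          | nil => rfl
          | cons w t'' =>
            exfalso
            have harc_wq : (w, q) ∈ N.arcs := (List.isChain_cons_cons.mp hclqt).1
            exact no_parent hq0 harc_wq
        subst ht'
        have hm3 : m = 3 := by simp at hlent'; omega
        have hqaρ : qa ≠ ρ := by rw [← hqρ]; exact hqa_ne
        have hqav : qa ∈ N.verts := (hmem _ hqaarc).1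
        have hreach := reach hmem hacy hu qa hqav
        have htg : Relation.TransGen N.Arc ρ qa := by
          rcases Relation.reflTransGen_iff_eq_or_transGen.mp hreach with h | h
          · exact absurd h hqaρ
          · exact h
        obtain ⟨t0, hch0, hm0⟩ := transGen_chain hmem htg
        have hch : (x :: p :: qa :: (t0 ++ [ρ])).Chain' (fun u v => N.Arc v u) := by
          rw [List.Chain', List.isChain_cons_cons, List.isChain_cons_cons]
          exact ⟨harc_px, hqaarc, hch0⟩
        have hle := hmax _ hch (by
          intro v hv
          rcases List.mem_cons.mp hv with rfl | hv
          · exact hxv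
          rcases List.mem_cons.mp hv with rfl | hv
          · exact hpv
          · exact hm0 v hv) (by simp)
        simp at hle
        omega
      · obtain ⟨qb, hqb⟩ := exists_parent hq0
        obtain ⟨M, red, bin, tc, lt⟩ := lemmaC N X hmem hne hacy hρEU' hcls hlf htc
          hxc hlx hleafc harc_px hcarc hretp harc_qp hqaarc hqa_ne hqb
        exact ⟨M, X, Pick.ret x c, red, bin, tc, lt⟩

lemma main_aux : ∀ n (R : DNet) (X : Finset ℕ), R.verts.card ≤ n →
    IsRootedBinaryNet R X → R.TreeChild → Orchard R := by
  intro n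
  induction n with
  | zero =>
      intro R X hcard hR _
      exfalso
      rcases hR with ⟨x, _, hverts, _⟩ | ⟨_, _, _, ⟨ρ, ⟨hρv, _⟩, _⟩, _, _⟩
      · rw [hverts, Finset.card_singleton] at hcard; omega
      · have := Finset.card_pos.mpr ⟨ρ, hρv⟩; omega
  | succ n ih =>
      intro R X hcard hR htc
      rcases hR with ⟨x, hX, hverts, harcs⟩ | ⟨hmem, hne, hacy, hρ, hcls, hlf⟩
      · exact ⟨fun _ => R, 0, rfl, fun i hi => absurd hi (Nat.not_lt_zero i),
          ⟨by rw [hverts, Finset.card_singleton], harcs⟩⟩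
      · obtain ⟨M, X', r, hst, hbinM, htcM, hlt⟩ :=
          exists_step R X hmem hne hacy hρ hcls hlf htc
        obtain ⟨Ns, k, h0, hseq, hsv⟩ := ih M X' (by omega) hbinM htcM
        refine ⟨fun j => if j = 0 then R else Ns (j - 1), k + 1, by simp, ?_, by simp [hsv]⟩
        intro i hi
        rcases Nat.eq_zero_or_pos i with rfl | hpos
        · refine ⟨r, ?_⟩
          simpa [h0] using hst
        · have h1 : i ≠ 0 := by omega
          have h2 : i + 1 ≠ 0 := by omega
          simp only [h1, h2, if_false]
          obtain ⟨r', hr'⟩ := hseq (i - 1) (by omega)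
          have h3 : i - 1 + 1 = i := by omega
          rw [h3] at hr'
          have h4 : i + 1 - 1 = i := by omega
          rw [h4]
          exact ⟨r', hr'⟩

end TCProof

/-- Every rooted binary tree-child network is orchard. -/
theorem treeChild_is_orchard (R : DNet) (X : Finset ℕ)
    (hR : IsRootedBinaryNet R X) (htc : R.TreeChild) :
    Orchard R :=
  TCProof.main_aux R.verts.card R X le_rfl hR htc
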